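/- arXiv:2105.03231 — 3 statements merged into one kernel-verified Lean document; each statement's English description precedes it below -/
import Mathlib

section
/- Let W be an elliptic curve over a field F with abelian point group W.Point, let i ≠ j in Fin 9, and define T : (Fin 9 → W.Point) → (Fin 9 → W.Point) by T(Q) l = Q l for l ≠ i, j, T(Q) j = Q j − δ(Q), and T(Q) i = Q i + δ(Q), where δ(Q) = ∑_{l} Q l. Let k ∈ ℕ and let P : Fin 9 → W.Point satisfy k • δ(P) = 0 (i.e. the nine points are base points of a Halphen pencil of index k). Then the k-th iterate of T fixes P: T^[k](P) = P, so the k-th iteration of the elliptic Painlevé mapping is autonomous on the parameters. -/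
open WeierstrassCurve Classical in
/-- The transformation of the nine parameter points under the elliptic Painlevé
mapping `T_{ij}`: `T(Q) l = Q l` for `l ≠ i, j`, `T(Q) i = Q i + δ(Q)` and
`T(Q) j = Q j - δ(Q)`, where `δ(Q) = ∑ l, Q l` in the group of points of the
elliptic curve. -/
noncomputable def painleveParamMap {F : Type*} [Field F]
    (W : WeierstrassCurve F) [W.IsElliptic] (i j : Fin 9)
    (Q : Fin 9 → W.toAffine.Point) : Fin 9 → W.toAffine.Point :=
  fun l =>
    if l = i then Q i + ∑ m, Q m
    else if l = j then Q j - ∑ m, Q m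
    else Q l

/-! `T` adds `δ(Q)` to the `i`-th point and subtracts it from the `j`-th, so `δ` is invariant.
Along an orbit `T` is therefore the translation by one fixed vector, and `T^[k] P` is `P`
translated by `k • δ(P)` at `i` and `-k • δ(P)` at `j`, which vanishes by hypothesis. -/

namespace PainleveParam

variable {ι A : Type*} [DecidableEq ι] [AddCommGroup A]

def pairShift (i j : ι) : A →+ ι → A :=
  AddMonoidHom.single (fun _ => A) i - AddMonoidHom.single (fun _ => A) j

theorem pairShift_apply (i j : ι) (c : A) :
    pairShift i j c = Pi.single i c - Pi.single j c :=
  rfl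

variable [Fintype ι]

theorem sum_pairShift (i j : ι) (c : A) : ∑ l, pairShift i j c l = 0 := by
  simp [pairShift_apply, Finset.sum_sub_distrib]

def shiftBySum (i j : ι) (Q : ι → A) : ι → A :=
  Q + pairShift i j (∑ l, Q l)

theorem sum_add_pairShift (i j : ι) (Q : ι → A) (c : A) :
    ∑ l, (Q + pairShift i j c) l = ∑ l, Q l := by
  simp only [Pi.add_apply, Finset.sum_add_distrib, sum_pairShift, add_zero]

theorem iterate_shiftBySum (i j : ι) (n : ℕ) (Q : ι → A) :
    (shiftBySum i j)^[n] Q = Q + pairShift i j (n • ∑ l, Q l) := by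
  induction n with
  | zero => simp
  | succ n ih =>
    have hsum : ∑ l, ((shiftBySum i j)^[n] Q) l = ∑ l, Q l := by
      rw [ih, sum_add_pairShift]
    rw [Function.iterate_succ_apply', shiftBySum, hsum, ih, succ_nsmul, map_add, add_assoc]

theorem iterate_shiftBySum_eq_self {i j : ι} {n : ℕ} {Q : ι → A} (h : n • ∑ l, Q l = 0) :
    (shiftBySum i j)^[n] Q = Q := by
  rw [iterate_shiftBySum, h, map_zero, add_zero]

end PainleveParam

open PainleveParam

open Classical in
theorem painleveParamMap_eq_shiftBySum {F : Type*} [Field F] (W : WeierstrassCurve F)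
    [W.IsElliptic] {i j : Fin 9} (hij : i ≠ j) :
    painleveParamMap W i j = shiftBySum i j := by
  funext Q l
  simp only [painleveParamMap, shiftBySum, Pi.add_apply, pairShift_apply, Pi.sub_apply,
    Pi.single_apply]
  split_ifs <;> subst_vars
  all_goals first | contradiction | simp [sub_eq_add_neg]

open Classical in
/-- Proposition 1: if the nine parameter points are the base points of a Halphen
pencil of index `k`, i.e. `k • (∑ l, P l) = 0` in the group law on the cubic curve
through the nine points, then the `k`-th iteration of the elliptic Painlevé mapping
is autonomous on the parameters: `T^[k] P = P`. -/
theorem painleve_halphen_autonomous {F : Type*} [Field F]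
    (W : WeierstrassCurve F) [W.IsElliptic] (i j : Fin 9) (hij : i ≠ j)
    (k : ℕ) (P : Fin 9 → W.toAffine.Point) (hP : k • (∑ l, P l) = 0) :
    (painleveParamMap W i j)^[k] P = P := by
  rw [painleveParamMap_eq_shiftBySum W hij]
  exact iterate_shiftBySum_eq_self hP
end

section
/- Let R be a commutative ring and s, t ∈ R. Define φ₁ : R × R × R → R × R × R by φ₁(x, y, z) = (s(y² − t²z²)z, xy(y − sz), xz(y − sz)). Then for all (x, y, z) ∈ R³ one has the polynomial identity φ₁(φ₁(x, y, z)) = λ • (x, y, z) componentwise, where λ = s · x² · z · (y − sz)³ · (y² − t²z²). In particular φ₁ is an involution as a rational/projective map. -/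
/-- The first HKY switch `Φ₁ : [x : y : z] ↦ [s(y² − t²z²)z : xy(y − sz) : xz(y − sz)]`
in homogeneous coordinates, as a polynomial map on triples. -/
def hkyPhi1 {R : Type*} [CommRing R] (s t : R) (p : R × R × R) : R × R × R :=
  (s * (p.2.1 ^ 2 - t ^ 2 * p.2.2 ^ 2) * p.2.2,
   p.1 * p.2.1 * (p.2.1 - s * p.2.2),
   p.1 * p.2.2 * (p.2.1 - s * p.2.2))

/-- Polynomial identity: `φ₁ ∘ φ₁` is componentwise multiplication by
`λ = s·x²·z·(y − sz)³·(y² − t²z²)`; in particular `Φ₁` is an involution as a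
rational/projective map. -/
theorem hkyPhi1_involution {R : Type*} [CommRing R] (s t : R) :
    ∀ x y z : R,
      hkyPhi1 s t (hkyPhi1 s t (x, y, z)) =
        (s * x ^ 2 * z * (y - s * z) ^ 3 * (y ^ 2 - t ^ 2 * z ^ 2)) • (x, y, z) := by
  intro x y z
  simp only [hkyPhi1, Prod.smul_mk, smul_eq_mul, Prod.mk.injEq]
  refine ⟨by ring, by ring, by ring⟩
end

section
/- Let R be a commutative ring and s, t ∈ R. Define φ₂ : R × R × R → R × R × R by φ₂(x, y, z) = (xy(sx − z), (x² − t²z²)z, yz(sx − z)). Then for all (x, y, z) ∈ R³ one has the polynomial identity φ₂(φ₂(x, y, z)) = μ • (x, y, z) componentwise, where μ = y² · z · (sx − z)³ · (x² − t²z²). In particular φ₂ is an involution as a rational/projective map. -/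
/-- The second HKY switch `Φ₂ : [x : y : z] ↦ [xy(sx − z) : (x² − t²z²)z : yz(sx − z)]`
in homogeneous coordinates, as a polynomial map on triples. -/
def hkyPhi2 {R : Type*} [CommRing R] (s t : R) (p : R × R × R) : R × R × R :=
  (p.1 * p.2.1 * (s * p.1 - p.2.2),
   (p.1 ^ 2 - t ^ 2 * p.2.2 ^ 2) * p.2.2,
   p.2.1 * p.2.2 * (s * p.1 - p.2.2))

/-- Polynomial identity: `φ₂ ∘ φ₂` is componentwise multiplication by
`μ = y²·z·(sx − z)³·(x² − t²z²)`; in particular `Φ₂` is an involution as a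
rational/projective map. -/
theorem hkyPhi2_involution {R : Type*} [CommRing R] (s t : R) :
    ∀ x y z : R,
      hkyPhi2 s t (hkyPhi2 s t (x, y, z)) =
        (y ^ 2 * z * (s * x - z) ^ 3 * (x ^ 2 - t ^ 2 * z ^ 2)) • (x, y, z) := by
  intro x y z
  simp only [hkyPhi2, Prod.smul_def, smul_eq_mul, Prod.mk.injEq]
  refine ⟨by ring, by ring, by ring⟩
end
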